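/- arXiv:2103.10580 — 2 statements merged into one kernel-verified Lean document; each statement's English description precedes it below -/
import Mathlib

section
/- For every finite simple graph G, 𝓜(S(G), x) = x^{|E(G)|−|V(G)|} · 𝓛𝓜(G, x²) as an identity of rational functions (equivalently, x^{|V(G)|} · 𝓜(S(G), x) = x^{|E(G)|} · 𝓛𝓜(G, x²) as polynomials). -/
/-!
A matching of `S(G)` is a set of incidences `(v, e)` (the edge `{v, v_e}`) that uses every vertex
and every edge of `G` at most once, and contributes `(-1)^k x^(|V| + |E| - 2k)`.
On the other side, expanding `∏ (x² - d(v))` over the vertices left uncovered by a matching `N`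
of `G` lets each such vertex either take `x²` or pick one incident edge with sign `-1`. Together
with the two incidences of every edge of `N` these choices form a set `Q` of incidences using
every vertex at most once, and `N` is recovered as a set of edges picked by both of their
endpoints in `Q`. For fixed `Q` the sum of `(-1)^|N|` over all such `N` vanishes unless no edge is
picked twice, i.e. unless `Q` is a matching of `S(G)`, and the surviving terms match the left side.
-/

namespace LM

open Finset

variable {V : Type*}

/-- The set of matchings of `G`, as finsets of edges that pairwise share no vertex. -/
def matchings [Fintype V] [DecidableEq V] (G : SimpleGraph V) [DecidableRel G.Adj] :
    Finset (Finset (Sym2 V)) :=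
  G.edgeFinset.powerset.filter
    (fun M => ∀ e ∈ M, ∀ f ∈ M, e ≠ f → ∀ w : V, w ∈ e → w ∉ f)

/-- The set of vertices covered by a set of edges. -/
def covered [Fintype V] [DecidableEq V] (M : Finset (Sym2 V)) : Finset V :=
  Finset.univ.filter (fun v => ∃ e ∈ M, v ∈ e)

/-- The multivariate matching polynomial `𝔐(G, x_G)`. -/
noncomputable def mvMatch [Fintype V] [DecidableEq V] (G : SimpleGraph V)
    [DecidableRel G.Adj] : MvPolynomial V ℝ :=
  ∑ M ∈ matchings G, (-1 : MvPolynomial V ℝ) ^ M.card *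
    ∏ v ∈ Finset.univ \ covered M, MvPolynomial.X v

/-- The matching polynomial `𝓜(G, x)`. -/
noncomputable def matchPoly [Fintype V] [DecidableEq V] (G : SimpleGraph V)
    [DecidableRel G.Adj] : Polynomial ℝ :=
  ∑ M ∈ matchings G, (-1 : Polynomial ℝ) ^ M.card *
    Polynomial.X ^ (Fintype.card V - 2 * M.card)

/-- The Laplacian matching polynomial `𝓛𝓜(G, x)`. -/
noncomputable def lapMatch [Fintype V] [DecidableEq V] (G : SimpleGraph V)
    [DecidableRel G.Adj] : Polynomial ℝ :=
  ∑ M ∈ matchings G, (-1 : Polynomial ℝ) ^ M.card *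
    ∏ v ∈ Finset.univ \ covered M, (Polynomial.X - Polynomial.C (G.degree v : ℝ))

/-- The largest real root of a polynomial (`sSup` of its set of real roots). -/
noncomputable def lroot (p : Polynomial ℝ) : ℝ := sSup {x : ℝ | p.IsRoot x}

instance instDecidableRelInduceAdj (G : SimpleGraph V) [DecidableRel G.Adj] (s : Set V) :
    DecidableRel (G.induce s).Adj := fun a b =>
  inferInstanceAs (Decidable (G.Adj a b))

/-- The relation underlying the subdivision of `G`: an original vertex `a` is joined to the
new vertex `v_e` of every edge `e` incident with `a`. -/
def sdRel (G : SimpleGraph V) (x y : V ⊕ G.edgeSet) : Prop :=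
  ∃ (a : V) (e : G.edgeSet), x = Sum.inl a ∧ y = Sum.inr e ∧ a ∈ (e : Sym2 V)

instance [Fintype V] [DecidableEq V] (G : SimpleGraph V) [DecidableRel G.Adj]
    (x y : V ⊕ G.edgeSet) : Decidable (sdRel G x y) :=
  inferInstanceAs (Decidable (∃ (_ : V) (_ : G.edgeSet), _ ∧ _ ∧ _))

/-- The subdivision `S(G)` of `G`: every edge `e = {a, b}` is replaced by a new vertex `v_e`
together with the two edges `{a, v_e}` and `{v_e, b}`. -/
def subdivision (G : SimpleGraph V) : SimpleGraph (V ⊕ G.edgeSet) :=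
  SimpleGraph.fromRel (sdRel G)

instance [Fintype V] [DecidableEq V] (G : SimpleGraph V) [DecidableRel G.Adj] :
    DecidableRel (subdivision G).Adj := fun x y =>
  inferInstanceAs (Decidable (x ≠ y ∧ (sdRel G x y ∨ sdRel G y x)))

theorem sum_powerset_neg_one_pow_card_mul {α R : Type*} [DecidableEq α] [Ring R]
    (s : Finset α) (a : R) :
    ∑ t ∈ s.powerset, (-1 : R) ^ #t * a = if s = ∅ then a else 0 := by
  have h := congrArg (Int.cast : ℤ → R) (sum_powerset_neg_one_pow_card (x := s))
  push_cast at h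
  rw [← sum_mul, h]
  split_ifs <;> simp

section PartialSections

variable {α β : Type*} [DecidableEq α]

open scoped Classical in
def partialSections (I : Finset (α × β)) (U : Finset α) : Finset (Finset (α × β)) :=
  (I.filter (·.1 ∈ U)).powerset.filter fun Q => Set.InjOn Prod.fst (Q : Set (α × β))

variable {I Q : Finset (α × β)} {U : Finset α}

theorem mem_partialSections :
    Q ∈ partialSections I U ↔
      Q ⊆ I ∧ (∀ p ∈ Q, p.1 ∈ U) ∧ Set.InjOn Prod.fst (Q : Set (α × β)) := by
  simp only [partialSections, mem_filter, mem_powerset, subset_iff, and_assoc, forall_and]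

theorem card_le_of_mem_partialSections (hQ : Q ∈ partialSections I U) : #Q ≤ #U := by
  obtain ⟨-, hU, hinj⟩ := mem_partialSections.mp hQ
  rw [← card_image_of_injOn hinj]
  exact card_le_card (image_subset_iff.mpr hU)

theorem notMem_of_mem_partialSections {p : α × β} (hQ : Q ∈ partialSections I U)
    (hp : p.1 ∉ U) : p ∉ Q :=
  fun hpQ => hp ((mem_partialSections.mp hQ).2.1 p hpQ)

variable [DecidableEq β]

theorem partialSections_insert {a : α} (ha : a ∉ U) :
    partialSections I (insert a U) = partialSections I U ∪
      (I.filter (·.1 = a)).biUnion fun p => (partialSections I U).image (insert p) := by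
  ext Q
  simp only [mem_union, mem_biUnion, mem_image, mem_filter, mem_partialSections, mem_insert]
  constructor
  · rintro ⟨hI, hU, hinj⟩
    by_cases hp : ∃ p ∈ Q, p.1 = a
    · obtain ⟨p, hpQ, rfl⟩ := hp
      refine Or.inr ⟨p, ⟨hI hpQ, rfl⟩, Q.erase p, ⟨(erase_subset _ _).trans hI, ?_,
        hinj.mono (by simp)⟩, insert_erase hpQ⟩
      intro r hr
      obtain ⟨hrp, hrQ⟩ := mem_erase.mp hr
      exact (hU r hrQ).resolve_left fun h => hrp (hinj hrQ hpQ h)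
    · push Not at hp
      exact Or.inl ⟨hI, fun r hr => (hU r hr).resolve_left (hp r hr), hinj⟩
  · rintro (⟨hI, hU, hinj⟩ | ⟨p, ⟨hpI, rfl⟩, Q, ⟨hI, hU, hinj⟩, rfl⟩)
    · exact ⟨hI, fun r hr => Or.inr (hU r hr), hinj⟩
    · refine ⟨insert_subset hpI hI, ?_, ?_⟩
      · simp only [mem_insert, forall_eq_or_imp, true_or, true_and]
        exact fun r hr => Or.inr (hU r hr)
      · rw [coe_insert, Set.injOn_insert fun h => ha (hU p h)]
        exact ⟨hinj, fun ⟨r, hr, hrp⟩ => ha (hrp ▸ hU r hr)⟩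

theorem sum_partialSections_insert {M : Type*} [AddCommMonoid M] (f : Finset (α × β) → M)
    {a : α} (ha : a ∉ U) :
    ∑ Q ∈ partialSections I (insert a U), f Q = ∑ Q ∈ partialSections I U, f Q +
      ∑ p ∈ I.filter (·.1 = a), ∑ Q ∈ partialSections I U, f (insert p Q) := by
  have hnot : ∀ p ∈ I.filter (·.1 = a), ∀ Q ∈ partialSections I U, p ∉ Q :=
    fun p hp Q hQ => notMem_of_mem_partialSections hQ ((mem_filter.mp hp).2 ▸ ha)
  rw [partialSections_insert ha, sum_union, sum_biUnion]
  · refine congrArg _ (sum_congr rfl fun p hp => sum_image fun Q hQ R hR h => ?_)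
    rw [← erase_insert (hnot p hp Q hQ), h, erase_insert (hnot p hp R hR)]
  · intro p hp p' hp' hne
    simp only [Function.onFun, disjoint_left, mem_image]
    rintro _ ⟨Q, hQ, rfl⟩ ⟨R, hR, h⟩
    have : p ∈ insert p' R := h ▸ mem_insert_self p Q
    exact hnot p hp R hR ((mem_insert.mp this).resolve_left hne)
  · simp only [disjoint_left, mem_biUnion, mem_image]
    rintro _ hQ ⟨p, hp, R, -, rfl⟩
    exact hnot p hp _ hQ (mem_insert_self p R)

theorem prod_sub_card_eq_sum_partialSections {R : Type*} [CommRing R] (y : R)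
    (I : Finset (α × β)) (U : Finset α) :
    ∏ a ∈ U, (y - #(I.filter (·.1 = a))) =
      ∑ Q ∈ partialSections I U, (-1) ^ #Q * y ^ (#U - #Q) := by
  induction U using Finset.induction_on with
  | empty => simp [partialSections, filter_singleton]
  | @insert a U ha ih =>
    set S := ∑ Q ∈ partialSections I U, (-1 : R) ^ #Q * y ^ (#U - #Q)
    have hkeep : ∑ Q ∈ partialSections I U, (-1 : R) ^ #Q * y ^ (#U + 1 - #Q) = y * S := by
      rw [mul_sum]
      refine sum_congr rfl fun Q hQ => ?_
      rw [Nat.sub_add_comm (card_le_of_mem_partialSections hQ), pow_succ]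
      ring
    have hchoose : ∀ p ∈ I.filter (·.1 = a), ∑ Q ∈ partialSections I U,
        (-1 : R) ^ #(insert p Q) * y ^ (#U + 1 - #(insert p Q)) = -S := by
      intro p hp
      rw [← sum_neg_distrib]
      refine sum_congr rfl fun Q hQ => ?_
      rw [card_insert_of_notMem (notMem_of_mem_partialSections hQ ((mem_filter.mp hp).2 ▸ ha)),
        Nat.add_sub_add_right, pow_succ]
      ring
    rw [prod_insert ha, ih, sum_partialSections_insert _ ha, card_insert_of_notMem ha, hkeep,
      sum_congr rfl hchoose, sum_const, nsmul_eq_mul]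
    ring

end PartialSections

section Incidences

open SimpleGraph

variable [Fintype V] [DecidableEq V] (G : SimpleGraph V) [DecidableRel G.Adj]

def incidences : Finset (V × G.edgeSet) := univ.filter fun q => q.1 ∈ (q.2 : Sym2 V)

def incidencesOf (N : Finset (Sym2 V)) : Finset (V × G.edgeSet) :=
  (incidences G).filter fun q => (q.2 : Sym2 V) ∈ N

def doublyChosen (Q : Finset (V × G.edgeSet)) : Finset (Sym2 V) :=
  G.edgeFinset.filter fun e => incidencesOf G {e} ⊆ Q

variable {G} {N : Finset (Sym2 V)} {P Q : Finset (V × G.edgeSet)}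

theorem mem_matchings {M : Finset (Sym2 V)} :
    M ∈ matchings G ↔ M ⊆ G.edgeFinset ∧
      ∀ e ∈ M, ∀ f ∈ M, e ≠ f → ∀ w : V, w ∈ e → w ∉ f := by
  simp only [matchings, mem_filter, mem_powerset]

theorem eq_of_mem_matchings {W : Type*} [Fintype W] [DecidableEq W] {H : SimpleGraph W}
    [DecidableRel H.Adj] {M : Finset (Sym2 W)} (hM : M ∈ matchings H) {e f : Sym2 W}
    (he : e ∈ M) (hf : f ∈ M) {w : W} (hwe : w ∈ e) (hwf : w ∈ f) : e = f := by
  by_contra hef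
  exact (mem_matchings.mp hM).2 e he f hf hef w hwe hwf

theorem mem_incidences {q : V × G.edgeSet} : q ∈ incidences G ↔ q.1 ∈ (q.2 : Sym2 V) := by
  simp [incidences]

theorem mem_incidencesOf {q : V × G.edgeSet} :
    q ∈ incidencesOf G N ↔ q.1 ∈ (q.2 : Sym2 V) ∧ (q.2 : Sym2 V) ∈ N := by
  simp [incidencesOf, incidences]

theorem card_filter_incidences_fst (v : V) :
    #((incidences G).filter (·.1 = v)) = G.degree v := by
  rw [← card_incidenceFinset_eq_degree]
  refine card_nbij (fun q => (q.2 : Sym2 V)) ?_ ?_ ?_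
  · intro q hq
    simp only [mem_coe, mem_filter, mem_incidences] at hq
    exact (mem_incidenceFinset _ _ _).mpr ⟨q.2.2, hq.2 ▸ hq.1⟩
  · rintro ⟨a, e⟩ ha ⟨b, f⟩ hb hef
    simp only [mem_coe, mem_filter] at ha hb
    exact Prod.ext (ha.2.trans hb.2.symm) (Subtype.ext hef)
  · intro e he
    obtain ⟨hG, hv⟩ := (mem_incidenceFinset _ _ _).mp he
    exact ⟨(v, ⟨e, hG⟩), by simpa [mem_incidences] using hv, rfl⟩

theorem card_incidencesOf (hN : N ⊆ G.edgeFinset) : #(incidencesOf G N) = 2 * #N := by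
  rw [card_eq_sum_card_fiberwise (f := fun q => (q.2 : Sym2 V)) (t := N)
    fun q hq => (mem_incidencesOf.mp hq).2, mul_comm, ← smul_eq_mul, ← sum_const]
  refine sum_congr rfl fun e he => ?_
  have hG : e ∈ G.edgeSet := mem_edgeFinset.mp (hN he)
  have hfiber : (incidencesOf G N).filter (fun q => (q.2 : Sym2 V) = e) =
      e.toFinset.image fun v => (v, ⟨e, hG⟩) := by
    ext ⟨v, f⟩
    simp only [mem_filter, mem_incidencesOf, mem_image, Sym2.mem_toFinset, Prod.mk.injEq]
    constructor
    · rintro ⟨⟨hv, -⟩, rfl⟩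
      exact ⟨v, hv, rfl, rfl⟩
    · rintro ⟨w, hw, rfl, rfl⟩
      exact ⟨⟨hw, he⟩, rfl⟩
  rw [hfiber, card_image_of_injective _ fun v w h => congrArg Prod.fst h,
    Sym2.card_toFinset_of_not_isDiag _ (G.not_isDiag_of_mem_edgeSet hG)]

theorem covered_eq_image_incidencesOf (hN : N ⊆ G.edgeFinset) :
    covered N = (incidencesOf G N).image Prod.fst := by
  ext v
  simp only [covered, mem_filter, mem_univ, true_and, mem_image, mem_incidencesOf]
  constructor
  · rintro ⟨e, he, hv⟩
    exact ⟨(v, ⟨e, mem_edgeFinset.mp (hN he)⟩), ⟨hv, he⟩, rfl⟩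
  · rintro ⟨q, ⟨hv, he⟩, rfl⟩
    exact ⟨q.2, he, hv⟩

theorem injOn_fst_incidencesOf (hN : N ∈ matchings G) :
    Set.InjOn Prod.fst (incidencesOf G N : Set (V × G.edgeSet)) := by
  rintro ⟨v, e⟩ he ⟨w, f⟩ hf (rfl : v = w)
  obtain ⟨hve, heN⟩ := mem_incidencesOf.mp he
  obtain ⟨hvf, hfN⟩ := mem_incidencesOf.mp hf
  exact congrArg _ (Subtype.ext (eq_of_mem_matchings hN heN hfN hve hvf))

theorem card_covered (hN : N ∈ matchings G) : #(covered N) = 2 * #N := by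
  rw [covered_eq_image_incidencesOf (mem_matchings.mp hN).1,
    card_image_of_injOn (injOn_fst_incidencesOf hN), card_incidencesOf (mem_matchings.mp hN).1]

theorem subset_doublyChosen_iff :
    N ⊆ doublyChosen G Q ↔ N ⊆ G.edgeFinset ∧ incidencesOf G N ⊆ Q := by
  simp only [doublyChosen, subset_iff, mem_filter, mem_incidencesOf, mem_singleton]
  constructor
  · intro h
    exact ⟨fun e he => (h he).1, fun q ⟨hq, hqN⟩ => (h hqN).2 ⟨hq, rfl⟩⟩
  · intro ⟨hE, hQ⟩ e he
    exact ⟨hE he, fun q ⟨hq, hqe⟩ => hQ ⟨hq, hqe ▸ he⟩⟩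

theorem doublyChosen_eq_empty_iff (hQ : Q ∈ partialSections (incidences G) univ) :
    doublyChosen G Q = ∅ ↔ Set.InjOn Prod.snd (Q : Set (V × G.edgeSet)) := by
  obtain ⟨hI, -, hfst⟩ := mem_partialSections.mp hQ
  rw [eq_empty_iff_forall_notMem]
  constructor
  · intro h ⟨a, e⟩ ha ⟨b, f⟩ hb (hef : e = f)
    subst hef
    by_contra hne
    have hab : a ≠ b := fun hab => hne (by rw [hab])
    have hsym : (e : Sym2 V) = s(a, b) := (Sym2.mem_and_mem_iff hab).mp
      ⟨mem_incidences.mp (hI ha), mem_incidences.mp (hI hb)⟩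
    refine h e (mem_filter.mpr ⟨mem_edgeFinset.mpr e.2, fun ⟨c, f⟩ hc => ?_⟩)
    obtain ⟨hcf, hfe⟩ := mem_incidencesOf.mp hc
    obtain rfl : f = e := Subtype.ext (mem_singleton.mp hfe)
    rcases Sym2.mem_iff.mp (hsym ▸ hcf) with rfl | rfl
    · exact ha
    · exact hb
  · intro hsnd e he
    obtain ⟨heG, hsub⟩ := mem_filter.mp he
    induction e using Sym2.ind with
    | _ a b =>
      have hab : a ≠ b := (mem_edgeFinset.mp heG).ne
      have hmem : ∀ v ∈ s(a, b),
          ((v, ⟨s(a, b), mem_edgeFinset.mp heG⟩) : V × G.edgeSet) ∈ Q :=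
        fun v hv => hsub (mem_incidencesOf.mpr ⟨hv, mem_singleton_self _⟩)
      exact hab (congrArg Prod.fst (hsnd (hmem a (Sym2.mem_mk_left a b))
        (hmem b (Sym2.mem_mk_right a b)) rfl))

theorem disjoint_incidencesOf (hP : P ∈ partialSections (incidences G) (univ \ covered N)) :
    Disjoint P (incidencesOf G N) := by
  refine disjoint_left.mpr fun q hqP hqN => ?_
  have hq := (mem_partialSections.mp hP).2.1 q hqP
  obtain ⟨hq1, hq2⟩ := mem_incidencesOf.mp hqN
  exact (mem_sdiff.mp hq).2 (mem_filter.mpr ⟨mem_univ _, q.2, hq2, hq1⟩)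

theorem union_incidencesOf_mem_partialSections (hN : N ∈ matchings G)
    (hP : P ∈ partialSections (incidences G) (univ \ covered N)) :
    P ∪ incidencesOf G N ∈ partialSections (incidences G) univ := by
  obtain ⟨hPI, hPU, hPinj⟩ := mem_partialSections.mp hP
  refine mem_partialSections.mpr ⟨union_subset hPI (filter_subset _ _),
    fun _ _ => mem_univ _, ?_⟩
  rw [coe_union, Set.injOn_union (disjoint_coe.mpr (disjoint_incidencesOf hP))]
  refine ⟨hPinj, injOn_fst_incidencesOf hN, fun p hp q hq hpq => ?_⟩
  rw [covered_eq_image_incidencesOf (mem_matchings.mp hN).1] at hPU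
  exact (mem_sdiff.mp (hPU p hp)).2 (mem_image.mpr ⟨q, hq, hpq.symm⟩)

theorem mem_matchings_of_subset_doublyChosen (hQ : Q ∈ partialSections (incidences G) univ)
    (hN : N ⊆ doublyChosen G Q) : N ∈ matchings G := by
  obtain ⟨hE, hNQ⟩ := subset_doublyChosen_iff.mp hN
  refine mem_matchings.mpr ⟨hE, fun e he f hf hef w hwe hwf => hef ?_⟩
  have hmem : ∀ (g) (hg : g ∈ N), w ∈ g →
      ((w, ⟨g, mem_edgeFinset.mp (hE hg)⟩) : V × G.edgeSet) ∈ Q :=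
    fun g hg hwg => hNQ (mem_incidencesOf.mpr ⟨hwg, hg⟩)
  have := (mem_partialSections.mp hQ).2.2 (hmem e he hwe) (hmem f hf hwf) rfl
  exact congrArg (fun q : V × G.edgeSet => (q.2 : Sym2 V)) this

theorem sdiff_incidencesOf_mem_partialSections (hQ : Q ∈ partialSections (incidences G) univ)
    (hN : N ⊆ doublyChosen G Q) :
    Q \ incidencesOf G N ∈ partialSections (incidences G) (univ \ covered N) := by
  obtain ⟨hQI, -, hQinj⟩ := mem_partialSections.mp hQ
  obtain ⟨hE, hNQ⟩ := subset_doublyChosen_iff.mp hN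
  refine mem_partialSections.mpr ⟨sdiff_subset.trans hQI, fun q hq => ?_,
    hQinj.mono (by simp)⟩
  obtain ⟨hqQ, hqN⟩ := mem_sdiff.mp hq
  refine mem_sdiff.mpr ⟨mem_univ _, fun hcov => hqN ?_⟩
  rw [covered_eq_image_incidencesOf hE] at hcov
  obtain ⟨r, hr, hrq⟩ := mem_image.mp hcov
  rwa [hQinj hqQ (hNQ hr) hrq.symm]

theorem sum_matchings_partialSections_eq_sum_doublyChosen {M : Type*} [AddCommMonoid M]
    (f : Finset (Sym2 V) → Finset (V × G.edgeSet) → M) :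
    ∑ N ∈ matchings G, ∑ P ∈ partialSections (incidences G) (univ \ covered N),
        f N (P ∪ incidencesOf G N) =
      ∑ Q ∈ partialSections (incidences G) univ,
        ∑ N ∈ (doublyChosen G Q).powerset, f N Q := by
  rw [sum_sigma', sum_sigma']
  refine sum_nbij' (fun x => ⟨x.2 ∪ incidencesOf G x.1, x.1⟩)
    (fun y => ⟨y.2, y.1 \ incidencesOf G y.2⟩) ?_ ?_ ?_ ?_ fun _ _ => rfl
  · rintro ⟨N, P⟩ hx
    obtain ⟨hN, hP⟩ := mem_sigma.mp hx
    refine mem_sigma.mpr ⟨union_incidencesOf_mem_partialSections hN hP, mem_powerset.mpr ?_⟩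
    exact subset_doublyChosen_iff.mpr ⟨(mem_matchings.mp hN).1, subset_union_right⟩
  · rintro ⟨Q, N⟩ hy
    obtain ⟨hQ, hN⟩ := mem_sigma.mp hy
    exact mem_sigma.mpr ⟨mem_matchings_of_subset_doublyChosen hQ (mem_powerset.mp hN),
      sdiff_incidencesOf_mem_partialSections hQ (mem_powerset.mp hN)⟩
  · rintro ⟨N, P⟩ hx
    simp only [union_sdiff_cancel_right (disjoint_incidencesOf (mem_sigma.mp hx).2)]
  · rintro ⟨Q, N⟩ hy
    have := (subset_doublyChosen_iff.mp (mem_powerset.mp (mem_sigma.mp hy).2)).2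
    simp only [sdiff_union_of_subset this]

end Incidences

section Subdivision

open SimpleGraph

variable {G : SimpleGraph V}

def incidenceEdge : V × G.edgeSet ↪ Sym2 (V ⊕ G.edgeSet) where
  toFun q := s(.inl q.1, .inr q.2)
  inj' := by
    rintro ⟨a, e⟩ ⟨b, f⟩ h
    simpa [Sym2.eq_iff] using h

theorem mem_incidenceEdge {q : V × G.edgeSet} {x : V ⊕ G.edgeSet} :
    x ∈ incidenceEdge q ↔ x = .inl q.1 ∨ x = .inr q.2 :=
  Sym2.mem_iff

variable [Fintype V] [DecidableEq V] [DecidableRel G.Adj]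

theorem mem_edgeSet_subdivision {ε : Sym2 (V ⊕ G.edgeSet)} :
    ε ∈ (subdivision G).edgeSet ↔ ∃ q ∈ incidences G, incidenceEdge q = ε := by
  induction ε using Sym2.ind with
  | _ x y =>
    simp only [mem_edgeSet, subdivision, fromRel_adj, sdRel, incidenceEdge]
    constructor
    · rintro ⟨-, ⟨a, e, rfl, rfl, h⟩ | ⟨a, e, rfl, rfl, h⟩⟩
      · exact ⟨(a, e), mem_incidences.mpr h, rfl⟩
      · exact ⟨(a, e), mem_incidences.mpr h, Sym2.eq_swap⟩
    · rintro ⟨⟨a, e⟩, h, hq⟩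
      rcases Sym2.eq_iff.mp hq with ⟨rfl, rfl⟩ | ⟨rfl, rfl⟩
      · exact ⟨Sum.inl_ne_inr, Or.inl ⟨a, e, rfl, rfl, mem_incidences.mp h⟩⟩
      · exact ⟨Sum.inr_ne_inl, Or.inr ⟨a, e, rfl, rfl, mem_incidences.mp h⟩⟩

variable (G) in
open scoped Classical in
def incidenceMatchings : Finset (Finset (V × G.edgeSet)) :=
  (partialSections (incidences G) univ).filter
    fun Q => Set.InjOn Prod.snd (Q : Set (V × G.edgeSet))

theorem mem_incidenceMatchings {Q : Finset (V × G.edgeSet)} :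
    Q ∈ incidenceMatchings G ↔ Q ⊆ incidences G ∧
      Set.InjOn Prod.fst (Q : Set (V × G.edgeSet)) ∧
      Set.InjOn Prod.snd (Q : Set (V × G.edgeSet)) := by
  simp [incidenceMatchings, mem_partialSections, and_assoc]

theorem map_incidenceEdge_mem_matchings {Q : Finset (V × G.edgeSet)}
    (hQ : Q ∈ incidenceMatchings G) : Q.map incidenceEdge ∈ matchings (subdivision G) := by
  obtain ⟨hI, hfst, hsnd⟩ := mem_incidenceMatchings.mp hQ
  refine mem_matchings.mpr ⟨fun ε hε => ?_, ?_⟩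
  · obtain ⟨q, hq, rfl⟩ := mem_map.mp hε
    exact mem_edgeFinset.mpr (mem_edgeSet_subdivision.mpr ⟨q, hI hq, rfl⟩)
  · simp only [mem_map]
    rintro _ ⟨q, hq, rfl⟩ _ ⟨r, hr, rfl⟩ hqr w hwq hwr
    refine hqr (congrArg incidenceEdge ?_)
    rcases mem_incidenceEdge.mp hwq with rfl | rfl <;>
      rcases mem_incidenceEdge.mp hwr with h | h
    · exact hfst hq hr (Sum.inl_injective h)
    · exact absurd h Sum.inl_ne_inr
    · exact absurd h Sum.inr_ne_inl
    · exact hsnd hq hr (Sum.inr_injective h)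

theorem exists_map_incidenceEdge_eq {M : Finset (Sym2 (V ⊕ G.edgeSet))}
    (hM : M ∈ matchings (subdivision G)) :
    ∃ Q ∈ incidenceMatchings G, Q.map incidenceEdge = M := by
  set Q := (incidences G).filter (incidenceEdge · ∈ M)
  have hshare : ∀ q ∈ Q, ∀ r ∈ Q, ∀ w,
      w ∈ incidenceEdge q → w ∈ incidenceEdge r → q = r :=
    fun q hq r hr w hwq hwr => incidenceEdge.injective
      (eq_of_mem_matchings hM (mem_filter.mp hq).2 (mem_filter.mp hr).2 hwq hwr)
  refine ⟨Q, mem_incidenceMatchings.mpr ⟨filter_subset _ _, ?_, ?_⟩, ?_⟩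
  · intro q hq r hr hqr
    exact hshare q hq r hr (.inl q.1) (by simp [mem_incidenceEdge])
      (by simp [mem_incidenceEdge, hqr])
  · intro q hq r hr hqr
    exact hshare q hq r hr (.inr q.2) (by simp [mem_incidenceEdge])
      (by simp [mem_incidenceEdge, hqr])
  · ext ε
    simp only [Q, mem_map, mem_filter]
    constructor
    · rintro ⟨q, ⟨-, hq⟩, rfl⟩
      exact hq
    · intro hε
      have hεE := mem_edgeFinset.mp ((mem_matchings.mp hM).1 hε)
      obtain ⟨q, hq, rfl⟩ := mem_edgeSet_subdivision.mp hεE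
      exact ⟨q, ⟨hq, hε⟩, rfl⟩

theorem matchings_subdivision :
    matchings (subdivision G) = (incidenceMatchings G).image (·.map incidenceEdge) := by
  ext M
  refine ⟨fun hM => mem_image.mpr (exists_map_incidenceEdge_eq hM), fun hM => ?_⟩
  obtain ⟨Q, hQ, rfl⟩ := mem_image.mp hM
  exact map_incidenceEdge_mem_matchings hQ

end Subdivision

section Polynomials

open Polynomial

variable [Fintype V] [DecidableEq V] (G : SimpleGraph V) [DecidableRel G.Adj]

theorem X_pow_mul_matchPoly_subdivision :
    (X : ℝ[X]) ^ Fintype.card V * matchPoly (subdivision G) =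
      ∑ Q ∈ incidenceMatchings G,
        (-1) ^ #Q * X ^ #G.edgeFinset * (X ^ 2) ^ (Fintype.card V - #Q) := by
  rw [matchPoly, matchings_subdivision, sum_image fun _ _ _ _ h => Finset.map_injective _ h,
    mul_sum]
  refine sum_congr rfl fun Q hQ => ?_
  have hQV : #Q ≤ Fintype.card V := by
    simpa using card_le_of_mem_partialSections (mem_filter.mp hQ).1
  have hQE : #Q ≤ #G.edgeFinset := by
    rw [G.edgeFinset_card, ← card_image_of_injOn (mem_incidenceMatchings.mp hQ).2.2]
    exact card_le_univ _
  rw [card_map, Fintype.card_sum, ← G.edgeFinset_card, ← pow_mul, mul_left_comm, mul_assoc,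
    ← pow_add, ← pow_add]
  congr 2
  omega

theorem X_pow_mul_lapMatch_comp :
    (X : ℝ[X]) ^ #G.edgeFinset * (lapMatch G).comp (X ^ 2) =
      ∑ Q ∈ partialSections (incidences G) univ, ∑ N ∈ (doublyChosen G Q).powerset,
        (-1) ^ #N * ((-1) ^ #Q * X ^ #G.edgeFinset * (X ^ 2) ^ (Fintype.card V - #Q)) := by
  rw [← sum_matchings_partialSections_eq_sum_doublyChosen, lapMatch, Polynomial.sum_comp, mul_sum]
  refine sum_congr rfl fun N hN => ?_
  have hdeg : ∀ v, (X : ℝ[X]) ^ 2 - C (G.degree v : ℝ) =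
      X ^ 2 - (#((incidences G).filter (·.1 = v)) : ℝ[X]) := by
    intro v
    rw [card_filter_incidences_fst, map_natCast]
  simp only [mul_comp, pow_comp, neg_comp, one_comp, Polynomial.prod_comp, sub_comp, X_comp,
    C_comp, hdeg, prod_sub_card_eq_sum_partialSections, mul_sum]
  refine sum_congr rfl fun P hP => ?_
  rw [card_union_of_disjoint (disjoint_incidencesOf hP),
    card_incidencesOf (mem_matchings.mp hN).1, card_univ_sdiff, card_covered hN, pow_add,
    pow_mul, neg_one_sq, one_pow, mul_one, add_comm, ← Nat.sub_sub]
  ring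

end Polynomials

/-- `𝓜(S(G), x) = x^{|E(G)|−|V(G)|} · 𝓛𝓜(G, x²)` as rational functions;
equivalently, as polynomials, `x^{|V(G)|} · 𝓜(S(G), x) = x^{|E(G)|} · 𝓛𝓜(G, x²)`. -/
theorem matchPoly_subdivision [Fintype V] [DecidableEq V] (G : SimpleGraph V)
    [DecidableRel G.Adj] :
    Polynomial.X ^ (Fintype.card V) * matchPoly (subdivision G) =
      Polynomial.X ^ G.edgeFinset.card * (lapMatch G).comp (Polynomial.X ^ 2) := by
  rw [X_pow_mul_matchPoly_subdivision, X_pow_mul_lapMatch_comp]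
  simp only [sum_powerset_neg_one_pow_card_mul]
  rw [← sum_filter, incidenceMatchings]
  refine sum_congr (filter_congr fun Q hQ => ?_) fun _ _ => rfl
  exact (doublyChosen_eq_empty_iff hQ).symm

end LM
end

section
/- Let F be a finite simple forest. Then the Laplacian matching polynomial of F equals the characteristic polynomial of its Laplacian matrix: 𝓛𝓜(F, x) = φ(L(F), x) = det(xI − L(F)). -/
namespace LM

open Finset

variable {V : Type*}

/-!
Expand `det (X - L(F))` by the Leibniz formula. The term of a permutation `σ` vanishes unless
`σ` moves every vertex it moves to a neighbour. In a forest such a `σ` is an involution: a cycle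
of `σ` of length at least three would lead from `σ i` back to `i` without using the edge
`{i, σ i}`, which therefore would not be a bridge. These involutions are exactly the products of
the transpositions along the edges of a matching `M`; the sign is `(-1)^|M|`, every moved vertex
contributes the entry `-(-1) = 1`, and every fixed vertex contributes `X - d(v)`.
-/

open Equiv SimpleGraph Polynomial

variable {G : SimpleGraph V} {σ : Perm V}

def MovesAlongEdges (G : SimpleGraph V) (σ : Perm V) : Prop :=
  ∀ v, σ v ≠ v → G.Adj v (σ v)

section Forest

variable [Finite V]

lemma MovesAlongEdges.not_isBridge (hσ : MovesAlongEdges G σ) {i : V} (hi : σ (σ i) ≠ i) :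
    ¬ G.IsBridge s(i, σ i) := by
  set H := G.deleteEdges {s(i, σ i)}
  rw [isBridge_iff, not_not, reachable_comm]
  by_contra hreach
  have hstep : ∀ v, v ≠ i → H.Reachable v (σ v) := by
    intro v hv
    by_cases hfix : σ v = v
    · rw [hfix]
    refine Adj.reachable ((deleteEdges_adj ..).mpr ⟨hσ v hfix, ?_⟩)
    rw [Set.mem_singleton_iff, Sym2.eq_iff]
    rintro (⟨rfl, -⟩ | ⟨rfl, h⟩)
    exacts [hv rfl, hi h]
  have horbit : ∀ n : ℕ, H.Reachable (σ i) ((σ ^ n) (σ i)) := by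
    intro n
    induction n with
    | zero => rfl
    | succ n ih =>
      have hne : (σ ^ n) (σ i) ≠ i := fun h => hreach (by rwa [h] at ih)
      rw [pow_succ', Perm.mul_apply]
      exact ih.trans (hstep _ hne)
  obtain ⟨n, hn⟩ := (Perm.sameCycle_apply_left.mpr (Perm.SameCycle.refl σ i)).exists_nat_pow_eq
  exact hreach (by simpa only [hn] using horbit n)

lemma MovesAlongEdges.involutive_of_isAcyclic (hσ : MovesAlongEdges G σ) (hG : G.IsAcyclic) :
    Function.Involutive σ := by
  intro i
  by_contra hi
  have hne : σ i ≠ i := fun h => hi (by rw [h, h])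
  exact hσ.not_isBridge hi (isAcyclic_iff_forall_adj_isBridge.mp hG (hσ i hne))

end Forest

section Involutions

variable [Fintype V] [DecidableEq V]

def permEdges (σ : Perm V) : Finset (Sym2 V) :=
  σ.support.image fun v => s(v, σ v)

@[simp]
lemma mem_covered {M : Finset (Sym2 V)} {v : V} : v ∈ covered M ↔ ∃ e ∈ M, v ∈ e := by
  simp [covered]

lemma covered_permEdges (hσ : Function.Involutive σ) : covered (permEdges σ) = σ.support := by
  ext v
  simp only [mem_covered, permEdges, mem_image, Perm.mem_support]
  constructor
  · rintro ⟨-, ⟨w, hw, rfl⟩, hv⟩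
    rcases Sym2.mem_iff.mp hv with rfl | rfl
    · exact hw
    · rwa [hσ w, ne_comm]
  · exact fun hv => ⟨_, ⟨v, hv, rfl⟩, Sym2.mem_mk_left _ _⟩

lemma card_support_eq_two_mul_card_permEdges (hσ : Function.Involutive σ) :
    #σ.support = 2 * #(permEdges σ) := by
  rw [permEdges, card_eq_sum_card_image (fun v => s(v, σ v)), mul_comm]
  refine sum_const_nat ?_
  simp only [mem_image, forall_exists_index, and_imp]
  rintro _ v hv rfl
  have hfiber : {w ∈ σ.support | s(w, σ w) = s(v, σ v)} = {v, σ v} := by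
    ext w
    simp only [mem_filter, Perm.mem_support, Sym2.eq_iff, mem_insert, mem_singleton]
    constructor
    · rintro ⟨-, ⟨rfl, -⟩ | ⟨rfl, -⟩⟩ <;> simp
    · rintro (rfl | rfl)
      · simpa using hv
      · simp only [hσ v]
        exact ⟨(Perm.mem_support.mp hv).symm, by simp⟩
  rw [hfiber, card_pair (Perm.mem_support.mp hv).symm]

lemma sign_eq_neg_one_pow_card_permEdges (hσ : Function.Involutive σ) :
    Perm.sign σ = (-1) ^ #(permEdges σ) := by
  have hsq : σ ^ 2 = 1 := Perm.ext fun v => hσ v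
  rw [Perm.sign_of_pow_two_eq_one hsq, Perm.card_fixedPoints, Perm.sum_cycleType,
    Nat.sub_sub_self (card_le_univ _), card_support_eq_two_mul_card_permEdges hσ,
    Nat.mul_div_cancel_left _ two_pos]

end Involutions

section Matchings

variable [Fintype V] [DecidableEq V] [DecidableRel G.Adj] {M : Finset (Sym2 V)}

lemma subset_edgeFinset_of_mem_matchings (hM : M ∈ matchings G) : M ⊆ G.edgeFinset :=
  mem_powerset.mp (mem_filter.mp hM).1

lemma eq_of_mem_of_mem_matchings (hM : M ∈ matchings G) {e f : Sym2 V} (he : e ∈ M) (hf : f ∈ M)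
    {v : V} (hve : v ∈ e) (hvf : v ∈ f) : e = f := by
  by_contra hne
  exact (mem_filter.mp hM).2 e he f hf hne v hve hvf

open Classical in
noncomputable def partner (M : Finset (Sym2 V)) (v : V) : V :=
  if h : ∃ e ∈ M, v ∈ e then Sym2.Mem.other h.choose_spec.2 else v

lemma partner_of_notMem_covered {v : V} (hv : v ∉ covered M) : partner M v = v := by
  rw [partner, dif_neg (by simpa using hv)]

lemma mk_partner_eq (hM : M ∈ matchings G) {e : Sym2 V} (he : e ∈ M) {v : V} (hv : v ∈ e) :
    s(v, partner M v) = e := by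
  have h : ∃ e ∈ M, v ∈ e := ⟨e, he, hv⟩
  rw [partner, dif_pos h, Sym2.other_spec]
  exact eq_of_mem_of_mem_matchings hM h.choose_spec.1 he h.choose_spec.2 hv

lemma adj_partner (hM : M ∈ matchings G) {v : V} (hv : v ∈ covered M) :
    G.Adj v (partner M v) := by
  obtain ⟨e, he, hve⟩ := mem_covered.mp hv
  rw [← mem_edgeSet, mk_partner_eq hM he hve, ← mem_edgeFinset]
  exact subset_edgeFinset_of_mem_matchings hM he

lemma partner_involutive (hM : M ∈ matchings G) : Function.Involutive (partner M) := by
  intro v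
  by_cases hv : v ∈ covered M
  · obtain ⟨e, he, hve⟩ := mem_covered.mp hv
    have hpe : partner M v ∈ e := mk_partner_eq hM he hve ▸ Sym2.mem_mk_right _ _
    have h := (mk_partner_eq hM he hpe).trans (mk_partner_eq hM he hve).symm
    rcases Sym2.eq_iff.mp h with ⟨hfix, -⟩ | ⟨-, h⟩
    · exact absurd hfix (adj_partner hM hv).ne.symm
    · exact h
  · rw [partner_of_notMem_covered hv, partner_of_notMem_covered hv]

noncomputable def matchingPerm (hM : M ∈ matchings G) : Perm V :=
  (partner_involutive hM).toPerm _

lemma matchingPerm_apply (hM : M ∈ matchings G) (v : V) : matchingPerm hM v = partner M v := rfl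

lemma movesAlongEdges_matchingPerm (hM : M ∈ matchings G) :
    MovesAlongEdges G (matchingPerm hM) := by
  intro v hv
  rw [matchingPerm_apply] at hv ⊢
  exact adj_partner hM (by_contra fun h => hv (partner_of_notMem_covered h))

lemma permEdges_matchingPerm (hM : M ∈ matchings G) : permEdges (matchingPerm hM) = M := by
  ext e
  simp only [permEdges, mem_image, Perm.mem_support, matchingPerm_apply]
  constructor
  · rintro ⟨v, hv, rfl⟩
    obtain ⟨e, he, hve⟩ := mem_covered.mp (by_contra fun h => hv (partner_of_notMem_covered h))
    rwa [mk_partner_eq hM he hve]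
  · intro he
    have hv := Sym2.out_fst_mem e
    exact ⟨_, (adj_partner hM (mem_covered.mpr ⟨e, he, hv⟩)).ne.symm, mk_partner_eq hM he hv⟩

lemma permEdges_mem_matchings (hσ : MovesAlongEdges G σ) (hinv : Function.Involutive σ) :
    permEdges σ ∈ matchings G := by
  have hmem : ∀ {v w}, w ∈ s(v, σ v) → s(v, σ v) = s(w, σ w) := by
    intro v w hw
    rcases Sym2.mem_iff.mp hw with rfl | rfl
    · rfl
    · rw [hinv, Sym2.eq_swap]
  simp only [matchings, permEdges, mem_filter, mem_powerset, subset_iff, mem_image,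
    Perm.mem_support]
  refine ⟨?_, ?_⟩
  · rintro _ ⟨v, hv, rfl⟩
    exact mem_edgeFinset.mpr (hσ v hv)
  · rintro _ ⟨v, -, rfl⟩ _ ⟨u, -, rfl⟩ hne w hwv hwu
    exact hne ((hmem hwv).trans (hmem hwu).symm)

lemma matchingPerm_permEdges (hσ : MovesAlongEdges G σ) (hinv : Function.Involutive σ) :
    matchingPerm (permEdges_mem_matchings hσ hinv) = σ := by
  ext v
  rw [matchingPerm_apply]
  by_cases hv : σ v = v
  · rw [hv, partner_of_notMem_covered]
    rwa [covered_permEdges hinv, Perm.notMem_support]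
  · have he : s(v, σ v) ∈ permEdges σ := mem_image_of_mem _ (Perm.mem_support.mpr hv)
    exact Sym2.congr_right.mp (mk_partner_eq (permEdges_mem_matchings hσ hinv) he
      (Sym2.mem_mk_left _ _))

end Matchings

section Laplacian

variable {R : Type*} [CommRing R] [Fintype V] [DecidableEq V] [DecidableRel G.Adj]

lemma charmatrix_lapMatrix_apply_self (v : V) :
    (G.lapMatrix R).charmatrix v v = X - C (G.degree v : R) := by
  simp [Matrix.charmatrix_apply_eq, lapMatrix, degMatrix]

lemma charmatrix_lapMatrix_apply_of_ne {v w : V} (hne : v ≠ w) :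
    (G.lapMatrix R).charmatrix v w = if G.Adj v w then 1 else 0 := by
  simp [Matrix.charmatrix_apply_ne _ _ _ hne, lapMatrix, degMatrix, adjMatrix_apply,
    Matrix.diagonal_apply_ne _ hne, apply_ite C]

lemma prod_charmatrix_lapMatrix_eq_zero (hσ : ¬ MovesAlongEdges G σ) :
    ∏ v, (G.lapMatrix R).charmatrix (σ v) v = 0 := by
  obtain ⟨v, hv, hnadj⟩ : ∃ v, σ v ≠ v ∧ ¬ G.Adj v (σ v) := by
    simpa [MovesAlongEdges] using hσ
  refine prod_eq_zero (mem_univ v) ?_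
  rw [charmatrix_lapMatrix_apply_of_ne hv, if_neg fun h => hnadj h.symm]

lemma prod_charmatrix_lapMatrix_of_movesAlongEdges (hσ : MovesAlongEdges G σ) :
    ∏ v, (G.lapMatrix R).charmatrix (σ v) v = ∏ v ∈ σ.supportᶜ, (X - C (G.degree v : R)) := by
  rw [← prod_mul_prod_compl σ.support, prod_eq_one, one_mul]
  · refine prod_congr rfl fun v hv => ?_
    rw [Perm.notMem_support.mp (mem_compl.mp hv), charmatrix_lapMatrix_apply_self]
  · intro v hv
    have hv : σ v ≠ v := Perm.mem_support.mp hv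
    rw [charmatrix_lapMatrix_apply_of_ne hv, if_pos (hσ v hv).symm]

lemma sign_mul_prod_charmatrix_lapMatrix (hσ : MovesAlongEdges G σ)
    (hinv : Function.Involutive σ) :
    ((Perm.sign σ : ℤ) : R[X]) * ∏ v, (G.lapMatrix R).charmatrix (σ v) v =
      (-1) ^ #(permEdges σ) * ∏ v ∈ univ \ covered (permEdges σ), (X - C (G.degree v : R)) := by
  rw [sign_eq_neg_one_pow_card_permEdges hinv, prod_charmatrix_lapMatrix_of_movesAlongEdges hσ,
    covered_permEdges hinv, compl_eq_univ_sdiff]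
  norm_num

end Laplacian

open Classical in
theorem sum_movesAlongEdges_involutive_eq_lapMatch [Fintype V] [DecidableEq V]
    (G : SimpleGraph V) [DecidableRel G.Adj] :
    ∑ σ with MovesAlongEdges G σ ∧ Function.Involutive σ,
      ((Perm.sign σ : ℤ) : ℝ[X]) * ∏ v, (G.lapMatrix ℝ).charmatrix (σ v) v = lapMatch G := by
  refine sum_bij' (fun σ _ => permEdges σ) (fun M hM => matchingPerm hM) ?_ ?_ ?_ ?_ ?_
  · intro σ hσ
    exact permEdges_mem_matchings (mem_filter.mp hσ).2.1 (mem_filter.mp hσ).2.2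
  · intro M hM
    exact mem_filter.mpr ⟨mem_univ _, movesAlongEdges_matchingPerm hM, partner_involutive hM⟩
  · intro σ hσ
    exact matchingPerm_permEdges (mem_filter.mp hσ).2.1 (mem_filter.mp hσ).2.2
  · intro M hM
    exact permEdges_matchingPerm hM
  · intro σ hσ
    exact sign_mul_prod_charmatrix_lapMatrix (mem_filter.mp hσ).2.1 (mem_filter.mp hσ).2.2

/-- For a finite forest `F`, the Laplacian matching polynomial equals the
characteristic polynomial `det(xI − L(F))` of the Laplacian matrix `L(F)`. -/
theorem lapMatch_eq_charpoly_lapMatrix_of_isAcyclic [Fintype V] [DecidableEq V]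
    (F : SimpleGraph V) [DecidableRel F.Adj] (hF : F.IsAcyclic) :
    lapMatch F = (F.lapMatrix ℝ).charpoly := by
  classical
  have hfilter : univ.filter (fun σ : Perm V => MovesAlongEdges F σ ∧ Function.Involutive σ) =
      univ.filter (MovesAlongEdges F) :=
    filter_congr fun σ _ => and_iff_left_of_imp (MovesAlongEdges.involutive_of_isAcyclic · hF)
  rw [← sum_movesAlongEdges_involutive_eq_lapMatch, hfilter, Matrix.charpoly, Matrix.det_apply']
  exact sum_filter_of_ne fun σ _ hσ => by_contra fun h =>
    hσ (mul_eq_zero_of_right _ (prod_charmatrix_lapMatrix_eq_zero h))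

end LM
end
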